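/- Antisymmetrized double zeta at half-shift: for even n ≥ 0 and odd integers s₁, s₂ ≥ 1, define τ_{s₁,s₂}(N) = Σ_{N≥k₁≥k₂≥1} 1/((k₁+n/2)^{s₁}(k₂+n/2)^{s₂}). Then if s₁, s₂ ≥ 3, τ_{s₁,s₂}(N) − τ_{s₂,s₁}(N) converges as N → ∞ to ζ(s₁,s₂) − ζ(s₂,s₁) − (Σ_{ℓ=1}^{n/2} 1/ℓ^{s₂}) ζ(s₁) + (Σ_{ℓ=1}^{n/2} 1/ℓ^{s₁}) ζ(s₂) + r for some rational r with d_n^{s₁+s₂} r ∈ ℤ. -/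

import Mathlib

open scoped BigOperators

/-- ζ(s) = Σ_{k≥1} 1/k^s. -/
noncomputable def zeta (s : ℕ) : ℝ := ∑' k : ℕ, 1 / ((k : ℝ) + 1) ^ s

/-- ζ(a,b) = Σ_{k>l≥1} 1/(k^a l^b). -/
noncomputable def zeta2 (a b : ℕ) : ℝ :=
  ∑' k : ℕ, (1 / ((k : ℝ) + 2) ^ a) * ∑ l ∈ Finset.range (k + 1), 1 / ((l : ℝ) + 1) ^ b

/-- d_n = lcm(1, 2, …, n). -/
def dlcm (n : ℕ) : ℕ := (Finset.Icc 1 n).lcm id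

/-- τ_{s₁,s₂}(N) = Σ_{N ≥ k₁ ≥ k₂ ≥ 1} 1/((k₁+n/2)^{s₁}(k₂+n/2)^{s₂}). -/
noncomputable def tau (n s₁ s₂ N : ℕ) : ℝ :=
  ∑ k₂ ∈ Finset.Icc 1 N, ∑ k₁ ∈ Finset.Icc k₂ N,
    1 / (((k₁ : ℝ) + (n : ℝ) / 2) ^ s₁ * ((k₂ : ℝ) + (n : ℝ) / 2) ^ s₂)

open Finset Filter

private lemma summable1 (s : ℕ) (hs : 2 ≤ s) : Summable (fun k : ℕ => 1 / ((k : ℝ) + 1) ^ s) := by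
  have h := Real.summable_one_div_nat_pow.mpr (by omega : 1 < s)
  have h2 := (summable_nat_add_iff 1).mpr h
  exact h2.congr fun k => by push_cast; ring

private lemma summable2' (s : ℕ) (hs : 2 ≤ s) : Summable (fun k : ℕ => 1 / ((k : ℝ) + 2) ^ s) := by
  have h2 := (summable_nat_add_iff 1).mpr (summable1 s hs)
  exact h2.congr fun k => by push_cast; ring

private lemma summable_f2 (a b : ℕ) (ha : 2 ≤ a) (hb : 2 ≤ b) :
    Summable (fun k : ℕ =>
      (1 / ((k : ℝ) + 2) ^ a) * ∑ l ∈ Finset.range (k + 1), 1 / ((l : ℝ) + 1) ^ b) := by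
  have hsb := summable1 b hb
  refine Summable.of_nonneg_of_le (fun k => ?_) (fun k => ?_) ((summable2' a ha).mul_right (zeta b))
  · positivity
  · have h1 : ∑ l ∈ Finset.range (k + 1), 1 / ((l : ℝ) + 1) ^ b ≤ zeta b :=
      Summable.sum_le_tsum (Finset.range (k + 1)) (fun i _ => by positivity) hsb
    have h2 : (0:ℝ) ≤ 1 / ((k : ℝ) + 2) ^ a := by positivity
    exact mul_le_mul_of_nonneg_left h1 h2

private lemma tendsto_P (s : ℕ) (hs : 2 ≤ s) :
    Tendsto (fun U : ℕ => ∑ j ∈ Finset.Ico 1 U, 1 / (j : ℝ) ^ s) atTop (nhds (zeta s)) := by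
  have h := (summable1 s hs).hasSum.tendsto_sum_nat
  have h2 := h.comp (tendsto_sub_atTop_nat 1)
  refine h2.congr fun U => ?_
  simp only [Function.comp_apply]
  rw [Finset.sum_Ico_eq_sum_range]
  refine Finset.sum_congr rfl fun i _ => ?_
  push_cast
  ring

private lemma tendsto_Q (a b : ℕ) (ha : 2 ≤ a) (hb : 2 ≤ b) :
    Tendsto (fun U : ℕ =>
        ∑ j ∈ Finset.Ico 1 U, (1 / (j : ℝ) ^ a) * ∑ i ∈ Finset.Ico 1 j, 1 / (i : ℝ) ^ b)
      atTop (nhds (zeta2 a b)) := by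
  have h := (summable_f2 a b ha hb).hasSum.tendsto_sum_nat
  have h2 := h.comp (tendsto_sub_atTop_nat 2)
  refine h2.congr' ?_
  filter_upwards [eventually_ge_atTop 2] with U hU
  simp only [Function.comp_apply]
  rw [Finset.sum_eq_sum_Ico_succ_bot (show 1 < U by omega), Finset.Ico_self, Finset.sum_empty,
    mul_zero, zero_add, Finset.sum_Ico_eq_sum_range]
  refine Finset.sum_congr rfl fun k _ => ?_
  rw [Finset.sum_Ico_eq_sum_range, show 2 + k - 1 = k + 1 from by omega]
  congr 1
  · push_cast; ring
  · refine Finset.sum_congr rfl fun l _ => ?_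
    push_cast; ring

private lemma qstar_peel (p q U : ℕ) :
    (∑ j₂ ∈ Finset.Ico 1 U, ∑ j₁ ∈ Finset.Ico j₂ U, (1 / (j₁ : ℝ) ^ p) * (1 / (j₂ : ℝ) ^ q))
      = (∑ j ∈ Finset.Ico 1 U, (1 / (j : ℝ) ^ p) * (1 / (j : ℝ) ^ q))
        + ∑ j₁ ∈ Finset.Ico 1 U, (1 / (j₁ : ℝ) ^ p) * ∑ i ∈ Finset.Ico 1 j₁, 1 / (i : ℝ) ^ q := by
  have step : ∀ j₂ ∈ Finset.Ico 1 U,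
      (∑ j₁ ∈ Finset.Ico j₂ U, (1 / (j₁ : ℝ) ^ p) * (1 / (j₂ : ℝ) ^ q))
        = (1 / (j₂ : ℝ) ^ p) * (1 / (j₂ : ℝ) ^ q)
          + ∑ j₁ ∈ Finset.Ico (j₂ + 1) U, (1 / (j₁ : ℝ) ^ p) * (1 / (j₂ : ℝ) ^ q) := by
    intro j₂ hj₂
    rw [Finset.mem_Ico] at hj₂
    exact Finset.sum_eq_sum_Ico_succ_bot hj₂.2 _
  rw [Finset.sum_congr rfl step, Finset.sum_add_distrib]
  congr 1
  rw [Finset.sum_Ico_Ico_comm' 1 U (fun j₂ j₁ => (1 / (j₁ : ℝ) ^ p) * (1 / (j₂ : ℝ) ^ q))]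
  refine Finset.sum_congr rfl fun j₁ _ => ?_
  rw [Finset.mul_sum]

private lemma qstar_diff (a b U : ℕ) :
    (∑ j₂ ∈ Finset.Ico 1 U, ∑ j₁ ∈ Finset.Ico j₂ U, (1 / (j₁ : ℝ) ^ a) * (1 / (j₂ : ℝ) ^ b))
      - (∑ j₂ ∈ Finset.Ico 1 U, ∑ j₁ ∈ Finset.Ico j₂ U, (1 / (j₁ : ℝ) ^ b) * (1 / (j₂ : ℝ) ^ a))
    = (∑ j₁ ∈ Finset.Ico 1 U, (1 / (j₁ : ℝ) ^ a) * ∑ i ∈ Finset.Ico 1 j₁, 1 / (i : ℝ) ^ b)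
      - ∑ j₁ ∈ Finset.Ico 1 U, (1 / (j₁ : ℝ) ^ b) * ∑ i ∈ Finset.Ico 1 j₁, 1 / (i : ℝ) ^ a := by
  rw [qstar_peel a b U, qstar_peel b a U]
  have hdiag : (∑ j ∈ Finset.Ico 1 U, (1 / (j : ℝ) ^ b) * (1 / (j : ℝ) ^ a))
      = ∑ j ∈ Finset.Ico 1 U, (1 / (j : ℝ) ^ a) * (1 / (j : ℝ) ^ b) :=
    Finset.sum_congr rfl fun j _ => mul_comm _ _
  rw [hdiag]
  ring

private lemma tau_formula (m a b N : ℕ) :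
    tau (m + m) a b N =
      (∑ j₂ ∈ Finset.Ico 1 (N + m + 1), ∑ j₁ ∈ Finset.Ico j₂ (N + m + 1),
          (1 / (j₁ : ℝ) ^ a) * (1 / (j₂ : ℝ) ^ b))
      - (∑ j ∈ Finset.Ico 1 (m + 1), 1 / (j : ℝ) ^ b)
          * (∑ j ∈ Finset.Ico 1 (N + m + 1), 1 / (j : ℝ) ^ a)
      + ∑ j ∈ Finset.Ico 1 (m + 1), (1 / (j : ℝ) ^ b) * ∑ i ∈ Finset.Ico 1 j, 1 / (i : ℝ) ^ a := by
  have emb : ∀ (c d : ℕ) (F : ℕ → ℝ),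
      (∑ k ∈ Finset.Icc c d, F (k + m)) = ∑ j ∈ Finset.Icc (c + m) (d + m), F j := by
    intro c d F
    rw [← Finset.map_add_right_Icc, Finset.sum_map]
    rfl
  have step1 : tau (m + m) a b N
      = ∑ j₂ ∈ Finset.Ico (m + 1) (N + m + 1), ∑ j₁ ∈ Finset.Ico j₂ (N + m + 1),
          (1 / (j₁ : ℝ) ^ a) * (1 / (j₂ : ℝ) ^ b) := by
    have c1 : tau (m + m) a b N
        = ∑ k₂ ∈ Finset.Icc 1 N, ∑ k₁ ∈ Finset.Icc k₂ N,
            (1 / ((k₁ + m : ℕ) : ℝ) ^ a) * (1 / ((k₂ + m : ℕ) : ℝ) ^ b) := by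
      unfold tau
      refine Finset.sum_congr rfl fun k₂ _ => Finset.sum_congr rfl fun k₁ _ => ?_
      push_cast
      have hhalf2 : ((m : ℝ) + m) / 2 = m := by ring
      rw [hhalf2, one_div_mul_one_div]
    rw [c1]
    have c2 : ∀ k₂, (∑ k₁ ∈ Finset.Icc k₂ N,
          (1 / ((k₁ + m : ℕ) : ℝ) ^ a) * (1 / ((k₂ + m : ℕ) : ℝ) ^ b))
        = ∑ j₁ ∈ Finset.Icc (k₂ + m) (N + m),
            (1 / (j₁ : ℝ) ^ a) * (1 / ((k₂ + m : ℕ) : ℝ) ^ b) := fun k₂ =>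
      emb k₂ N (fun j₁ => (1 / (j₁ : ℝ) ^ a) * (1 / ((k₂ + m : ℕ) : ℝ) ^ b))
    rw [Finset.sum_congr rfl fun k₂ _ => c2 k₂]
    have c3 := emb 1 N (fun j₂ => ∑ j₁ ∈ Finset.Icc j₂ (N + m),
      (1 / (j₁ : ℝ) ^ a) * (1 / (j₂ : ℝ) ^ b))
    rw [c3, show 1 + m = m + 1 from by omega, ← Finset.Ico_add_one_right_eq_Icc]
    refine Finset.sum_congr rfl fun j₂ _ => ?_
    rw [← Finset.Ico_add_one_right_eq_Icc]
  have step2 : ∀ j₂ ∈ Finset.Ico 1 (m + 1),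
      (∑ j₁ ∈ Finset.Ico j₂ (N + m + 1), (1 / (j₁ : ℝ) ^ a) * (1 / (j₂ : ℝ) ^ b))
        = (∑ j ∈ Finset.Ico 1 (N + m + 1), 1 / (j : ℝ) ^ a) * (1 / (j₂ : ℝ) ^ b)
          - (1 / (j₂ : ℝ) ^ b) * ∑ i ∈ Finset.Ico 1 j₂, 1 / (i : ℝ) ^ a := by
    intro j₂ hj₂
    rw [Finset.mem_Ico] at hj₂
    rw [← Finset.sum_mul, mul_comm (1 / (j₂ : ℝ) ^ b), ← sub_mul]
    congr 1
    rw [eq_sub_iff_add_eq, add_comm]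
    exact Finset.sum_Ico_consecutive _ (by omega : 1 ≤ j₂) (by omega : j₂ ≤ N + m + 1)
  have split := Finset.sum_Ico_consecutive (fun j₂ => ∑ j₁ ∈ Finset.Ico j₂ (N + m + 1),
      (1 / (j₁ : ℝ) ^ a) * (1 / (j₂ : ℝ) ^ b))
    (show 1 ≤ m + 1 by omega) (show m + 1 ≤ N + m + 1 by omega)
  rw [step1, ← split, Finset.sum_congr rfl step2, Finset.sum_sub_distrib, ← Finset.mul_sum]
  ring

private lemma int_part (n m s t : ℕ) (hmn : m ≤ n) :
    ∃ z : ℤ, ((dlcm n : ℚ)) ^ (s + t) *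
      (∑ j ∈ Finset.Ico 1 (m + 1), (1 / (j : ℚ) ^ s) * ∑ i ∈ Finset.Ico 1 j, 1 / (i : ℚ) ^ t)
        = z := by
  have hmem : ((dlcm n : ℚ)) ^ (s + t) *
      (∑ j ∈ Finset.Ico 1 (m + 1), (1 / (j : ℚ) ^ s) * ∑ i ∈ Finset.Ico 1 j, 1 / (i : ℚ) ^ t)
        ∈ (Int.castRingHom ℚ).range := by
    simp only [Finset.mul_sum]
    refine sum_mem fun j hj => sum_mem fun i hi => ?_
    rw [Finset.mem_Ico] at hj hi
    have hjd : j ∣ dlcm n := Finset.dvd_lcm (by rw [Finset.mem_Icc]; omega)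
    have hid : i ∣ dlcm n := Finset.dvd_lcm (by rw [Finset.mem_Icc]; omega)
    obtain ⟨c, hc⟩ := hjd
    obtain ⟨e, he⟩ := hid
    have hnat : dlcm n ^ (s + t) = c ^ s * e ^ t * (j ^ s * i ^ t) := by
      rw [pow_add]
      nth_rewrite 1 [hc]
      nth_rewrite 1 [he]
      ring
    have key : ((dlcm n : ℚ)) ^ (s + t)
        = (c : ℚ) ^ s * (e : ℚ) ^ t * ((j : ℚ) ^ s * (i : ℚ) ^ t) := by
      exact_mod_cast hnat
    have hj0 : (j : ℚ) ≠ 0 := Nat.cast_ne_zero.mpr (by omega)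
    have hi0 : (i : ℚ) ≠ 0 := Nat.cast_ne_zero.mpr (by omega)
    refine RingHom.mem_range.mpr ⟨(c : ℤ) ^ s * (e : ℤ) ^ t, ?_⟩
    show ((((c : ℤ) ^ s * (e : ℤ) ^ t : ℤ)) : ℚ) = _
    push_cast
    rw [key]
    field_simp
  obtain ⟨z, hz⟩ := hmem
  exact ⟨z, hz.symm⟩

/-- Antisymmetrized double zeta at half-shift: for even `n` and odd
`s₁, s₂ ≥ 3`, `τ_{s₁,s₂}(N) − τ_{s₂,s₁}(N)` converges to
`ζ(s₁,s₂) − ζ(s₂,s₁) − (Σ_{ℓ≤n/2} ℓ^{−s₂}) ζ(s₁) + (Σ_{ℓ≤n/2} ℓ^{−s₁}) ζ(s₂) + r`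
for some rational `r` with `d_n^{s₁+s₂} r ∈ ℤ`. -/
theorem antisymmetrized_half_shift (n s₁ s₂ : ℕ) (hn : Even n)
    (ho₁ : Odd s₁) (ho₂ : Odd s₂) (h₁ : 3 ≤ s₁) (h₂ : 3 ≤ s₂) :
    ∃ r : ℚ, (∃ m : ℤ, ((dlcm n : ℚ)) ^ (s₁ + s₂) * r = m) ∧
      Filter.Tendsto (fun N : ℕ => tau n s₁ s₂ N - tau n s₂ s₁ N) Filter.atTop
        (nhds (zeta2 s₁ s₂ - zeta2 s₂ s₁
          - (∑ l ∈ Finset.Icc 1 (n / 2), 1 / (l : ℝ) ^ s₂) * zeta s₁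
          + (∑ l ∈ Finset.Icc 1 (n / 2), 1 / (l : ℝ) ^ s₁) * zeta s₂ + (r : ℝ))) := by
  obtain ⟨m, hm⟩ := hn
  subst hm
  set rq : ℚ :=
      (∑ j ∈ Finset.Ico 1 (m + 1), (1 / (j : ℚ) ^ s₂) * ∑ i ∈ Finset.Ico 1 j, 1 / (i : ℚ) ^ s₁)
    - (∑ j ∈ Finset.Ico 1 (m + 1), (1 / (j : ℚ) ^ s₁) * ∑ i ∈ Finset.Ico 1 j, 1 / (i : ℚ) ^ s₂)
    with hrq
  refine ⟨rq, ?_, ?_⟩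
  · obtain ⟨z₁, hz₁⟩ := int_part (m + m) m s₂ s₁ (by omega)
    obtain ⟨z₂, hz₂⟩ := int_part (m + m) m s₁ s₂ (by omega)
    rw [Nat.add_comm s₁ s₂] at hz₂
    refine ⟨z₁ - z₂, ?_⟩
    rw [show s₁ + s₂ = s₂ + s₁ from Nat.add_comm s₁ s₂, hrq, mul_sub, hz₁, hz₂]
    push_cast
    ring
  · have hA : Finset.Icc 1 ((m + m) / 2) = Finset.Ico 1 (m + 1) := by
      rw [show (m + m) / 2 = m from by omega]
      exact (Finset.Ico_add_one_right_eq_Icc 1 m).symm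
    rw [hA]
    have hcomp : Tendsto (fun N : ℕ => N + m + 1) atTop atTop :=
      tendsto_atTop_mono (fun N => by show N ≤ N + m + 1; omega) tendsto_id
    have T1 := (tendsto_Q s₁ s₂ (by omega) (by omega)).comp hcomp
    have T2 := (tendsto_Q s₂ s₁ (by omega) (by omega)).comp hcomp
    have T3 := (tendsto_P s₁ (by omega)).comp hcomp
    have T4 := (tendsto_P s₂ (by omega)).comp hcomp
    have Tall := ((((T1.sub T2).sub
        (T3.const_mul (∑ l ∈ Finset.Ico 1 (m + 1), 1 / (l : ℝ) ^ s₂))).add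
        (T4.const_mul (∑ l ∈ Finset.Ico 1 (m + 1), 1 / (l : ℝ) ^ s₁))).add_const ((rq : ℝ)))
    refine Tall.congr fun N => ?_
    simp only [Function.comp_apply]
    have hcast : ((rq : ℚ) : ℝ)
        = (∑ j ∈ Finset.Ico 1 (m + 1), (1 / (j : ℝ) ^ s₂) * ∑ i ∈ Finset.Ico 1 j, 1 / (i : ℝ) ^ s₁)
        - (∑ j ∈ Finset.Ico 1 (m + 1), (1 / (j : ℝ) ^ s₁) * ∑ i ∈ Finset.Ico 1 j, 1 / (i : ℝ) ^ s₂) := by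
      rw [hrq]
      push_cast
      ring
    have tf1 := tau_formula m s₁ s₂ N
    have tf2 := tau_formula m s₂ s₁ N
    have qd := qstar_diff s₁ s₂ (N + m + 1)
    linear_combination (-1 : ℝ) * qd + hcast - tf1 + tf2
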